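/- arXiv:2312.02667 — 2 statements merged into one kernel-verified Lean document; each statement's English description precedes it below -/
import Mathlib

section
/- Let the MPS be in canonical form and suppose its wavefunction is normalized, i.e. Σ_σ |Ψ(σ)|² = 1. Then for any truncation rank χ' ≥ 1, the parallel MPS compression satisfies Σ_σ |Ψ(σ) − Ψ̃_T(σ)|² ≤ 2 ε(χ'), where ε(χ') = Σ_{i=1}^{N−1} ε_i(χ') is the global truncation error. -/
open Matrix

/-- Partial product `Λ⁰ Γ¹ Λ¹ ⋯ Γⁱ Λⁱ` of an MPS; the tensor `Γ i` is the site tensor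
of site `i + 1` (sites are numbered `1, …, N`, bonds `0, 1, …, N`). -/
noncomputable def mpsW {d : ℕ} (χ : ℕ → ℕ)
    (Γ : (i : ℕ) → Fin d → Matrix (Fin (χ i)) (Fin (χ (i + 1))) ℂ)
    (Λ : (i : ℕ) → Matrix (Fin (χ i)) (Fin (χ i)) ℂ) :
    (i : ℕ) → (ℕ → Fin d) → Matrix (Fin (χ 0)) (Fin (χ i)) ℂ
  | 0, _ => Λ 0
  | (i + 1), σ => mpsW χ Γ Λ i σ * Γ i (σ i) * Λ (i + 1)

/-- The MPS wavefunction `Ψ(σ)`: the unique entry (written as the sum of all entries) of the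
`1 × 1` matrix `Λ⁰ Γ¹ Λ¹ Γ² Λ² ⋯ Γᴺ Λᴺ` (the bond dimensions satisfy `χ 0 = χ N = 1`). -/
noncomputable def mpsPsi {d : ℕ} [NeZero d] (N : ℕ) (χ : ℕ → ℕ)
    (Γ : (i : ℕ) → Fin d → Matrix (Fin (χ i)) (Fin (χ (i + 1))) ℂ)
    (Λ : (i : ℕ) → Matrix (Fin (χ i)) (Fin (χ i)) ℂ)
    (σ : Fin N → Fin d) : ℂ :=
  ∑ a, ∑ b, mpsW χ Γ Λ N (fun k => if h : k < N then σ ⟨k, h⟩ else 0) a b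

/-- The diagonal projector `P` onto the first `χ'` basis vectors. -/
noncomputable def truncP (χ' k : ℕ) : Matrix (Fin k) (Fin k) ℂ :=
  Matrix.diagonal fun α => if (α : ℕ) < χ' then 1 else 0

/-- Partial product of the truncated MPS, with the projector `P` inserted at every
interior bond `i = 1, …, N - 1`. -/
noncomputable def mpsWT {d : ℕ} (N χ' : ℕ) (χ : ℕ → ℕ)
    (Γ : (i : ℕ) → Fin d → Matrix (Fin (χ i)) (Fin (χ (i + 1))) ℂ)
    (Λ : (i : ℕ) → Matrix (Fin (χ i)) (Fin (χ i)) ℂ) :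
    (i : ℕ) → (ℕ → Fin d) → Matrix (Fin (χ 0)) (Fin (χ i)) ℂ
  | 0, _ => Λ 0
  | (i + 1), σ => mpsWT N χ' χ Γ Λ i σ * Γ i (σ i) * Λ (i + 1) *
      (if i + 1 < N then truncP χ' (χ (i + 1)) else 1)

/-- The truncated wavefunction `Ψ̃_T(σ)`: the unique entry of
`Λ⁰ Γ¹ Λ¹ P₁ Γ² Λ² P₂ ⋯ P_{N-1} Γᴺ Λᴺ`. -/
noncomputable def mpsPsiT {d : ℕ} [NeZero d] (N χ' : ℕ) (χ : ℕ → ℕ)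
    (Γ : (i : ℕ) → Fin d → Matrix (Fin (χ i)) (Fin (χ (i + 1))) ℂ)
    (Λ : (i : ℕ) → Matrix (Fin (χ i)) (Fin (χ i)) ℂ)
    (σ : Fin N → Fin d) : ℂ :=
  ∑ a, ∑ b, mpsWT N χ' χ Γ Λ N (fun k => if h : k < N then σ ⟨k, h⟩ else 0) a b

/-- Canonical form: for every site `i + 1` (`i < N`), with `A = Λ i * Γ i s` and
`B = Γ i s * Λ (i+1)`, one has `∑ s, Aᴴ A = 1` and `∑ s, B Bᴴ = 1`. -/
noncomputable def IsCanonicalMPS {d : ℕ} (N : ℕ) (χ : ℕ → ℕ)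
    (Γ : (i : ℕ) → Fin d → Matrix (Fin (χ i)) (Fin (χ (i + 1))) ℂ)
    (Λ : (i : ℕ) → Matrix (Fin (χ i)) (Fin (χ i)) ℂ) : Prop :=
  ∀ i < N,
    (∑ s : Fin d, (Λ i * Γ i s)ᴴ * (Λ i * Γ i s) = 1) ∧
    (∑ s : Fin d, (Γ i s * Λ (i + 1)) * (Γ i s * Λ (i + 1))ᴴ = 1)

/-- Local truncation error `ε_i(χ') = ∑_{α ≥ χ'} (Λ^{[i]}_{αα})²`. -/
noncomputable def locErr (χ' : ℕ) (χ : ℕ → ℕ)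
    (Λ : (i : ℕ) → Matrix (Fin (χ i)) (Fin (χ i)) ℂ) (i : ℕ) : ℝ :=
  ∑ α : Fin (χ i), if χ' ≤ (α : ℕ) then ((Λ i α α).re) ^ 2 else 0

/-- Global truncation error `ε(χ') = ∑_{i=1}^{N-1} ε_i(χ')`. -/
noncomputable def globErr (N χ' : ℕ) (χ : ℕ → ℕ)
    (Λ : (i : ℕ) → Matrix (Fin (χ i)) (Fin (χ i)) ℂ) : ℝ :=
  ∑ i ∈ Finset.Ico 1 N, locErr χ' χ Λ i

/-!
Write `Ψ̃ = Ψ - ∑ⱼ δⱼ`, where `δⱼ` carries `1 - Pⱼ` at bond `j`, the projectors at the bonds to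
its right and none to its left (a telescoping sum). Splitting configurations at bond `j`, left
canonicity collapses the left halves to `Λⱼᴴ Λⱼ`, so `⟨Ψ, δⱼ⟩ = tr (Λⱼᴴ Λⱼ (1 - Pⱼ) Sⱼ)` with `Sⱼ`
pairing the exact and the truncated right halves. Right canonicity makes `1 - ∑ R Rᴴ` positive
semidefinite for both kinds of right halves (projectors only shrink it), so Cauchy–Schwarz gives
`‖Sⱼ b b‖ ≤ 1` and hence `‖⟨Ψ, δⱼ⟩‖ ≤ εⱼ`. The same positivity gives `‖Ψ̃‖ ≤ 1`, and then
`‖Ψ - Ψ̃‖² = ‖Ψ‖² + ‖Ψ̃‖² - 2 Re ⟨Ψ, Ψ̃⟩ ≤ 2 - 2 (1 - ε)`.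
-/

open scoped ComplexOrder

section MatrixFacts

variable {ι κ α β γ : Type*}

def entrySum [Fintype α] [Fintype γ] (M : Matrix α γ ℂ) : ℂ := ∑ a, ∑ c, M a c

lemma entrySum_sub [Fintype α] [Fintype γ] (M M' : Matrix α γ ℂ) :
    entrySum (M - M') = entrySum M - entrySum M' := by
  simp [entrySum, Finset.sum_sub_distrib]

lemma star_entrySum_mul_entrySum [Fintype α] [Fintype γ] [Unique α] [Unique γ]
    (M M' : Matrix α γ ℂ) : star (entrySum M) * entrySum M' = trace (Mᴴ * M') := by
  simp [entrySum, trace, mul_apply]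

lemma sum_sum_star_entrySum_mul_entrySum [Fintype ι] [Fintype κ] [Fintype α] [Fintype β]
    [Fintype γ] [Unique α] [Unique γ] (A B : ι → Matrix α β ℂ) (C D : κ → Matrix β γ ℂ) :
    ∑ i, ∑ k, star (entrySum (A i * C k)) * entrySum (B i * D k) =
      trace ((∑ i, (A i)ᴴ * B i) * ∑ k, D k * (C k)ᴴ) := by
  simp only [star_entrySum_mul_entrySum, Finset.sum_mul, Finset.mul_sum, trace_sum]
  rw [Finset.sum_comm]
  refine Fintype.sum_congr _ _ fun k => Fintype.sum_congr _ _ fun i => ?_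
  rw [conjTranspose_mul, Matrix.mul_assoc, trace_mul_comm]
  simp only [Matrix.mul_assoc]

lemma sum_conjTranspose_mul_mul_self [Fintype ι] [Fintype α] [Fintype β]
    (A : ι → Matrix α β ℂ) (B : Matrix β γ ℂ) :
    ∑ i, (A i * B)ᴴ * (A i * B) = Bᴴ * (∑ i, (A i)ᴴ * A i) * B := by
  simp only [conjTranspose_mul, Matrix.mul_sum, Matrix.sum_mul, Matrix.mul_assoc]

lemma sum_mul_mul_conjTranspose_self [Fintype ι] [Fintype β] [Fintype γ]
    (B : Matrix α β ℂ) (A : ι → Matrix β γ ℂ) :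
    ∑ i, B * A i * (B * A i)ᴴ = B * (∑ i, A i * (A i)ᴴ) * Bᴴ := by
  simp only [conjTranspose_mul, Matrix.mul_sum, Matrix.sum_mul, Matrix.mul_assoc]

lemma posSemidef_one_sub_sum_mul_mul_conjTranspose [Fintype ι] [Fintype β] [Fintype γ]
    [DecidableEq β] [DecidableEq γ] {B : ι → Matrix β γ ℂ} (hB : ∑ i, B i * (B i)ᴴ = 1)
    {Q T : Matrix γ γ ℂ} (hQ : (1 - Q * Qᴴ).PosSemidef) (hT : (1 - T).PosSemidef) :
    (1 - ∑ i, B i * Q * T * (B i * Q)ᴴ).PosSemidef := by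
  have hsplit : 1 - ∑ i, B i * Q * T * (B i * Q)ᴴ =
      ∑ i, B i * (1 - Q * Qᴴ) * (B i)ᴴ + ∑ i, B i * Q * (1 - T) * (B i * Q)ᴴ := by
    conv_lhs => rw [← hB]
    rw [← Finset.sum_sub_distrib, ← Finset.sum_add_distrib]
    refine Finset.sum_congr rfl fun i _ => ?_
    simp only [Matrix.mul_sub, Matrix.sub_mul, Matrix.mul_one, conjTranspose_mul,
      Matrix.mul_assoc]
    abel
  rw [hsplit]
  exact (posSemidef_sum _ fun i _ => hQ.mul_mul_conjTranspose_same _).add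
    (posSemidef_sum _ fun i _ => hT.mul_mul_conjTranspose_same _)

lemma sum_sum_norm_sq_le_one [Fintype κ] [Fintype γ] [DecidableEq β] {A : κ → Matrix β γ ℂ}
    (hA : (1 - ∑ k, A k * (A k)ᴴ).PosSemidef) (b : β) :
    ∑ k, ∑ c, ‖A k b c‖ ^ 2 ≤ 1 := by
  have h := hA.diag_nonneg (i := b)
  have hdiag : (∑ k, A k * (A k)ᴴ) b b = ((∑ k, ∑ c, ‖A k b c‖ ^ 2 : ℝ) : ℂ) := by
    simp [Matrix.sum_apply, mul_apply, Complex.mul_conj']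
  rw [Matrix.sub_apply, one_apply_eq, hdiag, sub_nonneg] at h
  exact_mod_cast h

lemma norm_sum_mul_conjTranspose_apply_le_one [Fintype κ] [Fintype γ] [DecidableEq β]
    {A B : κ → Matrix β γ ℂ} (hA : (1 - ∑ k, A k * (A k)ᴴ).PosSemidef)
    (hB : (1 - ∑ k, B k * (B k)ᴴ).PosSemidef) (b : β) : ‖(∑ k, A k * (B k)ᴴ) b b‖ ≤ 1 := by
  have hA' := Fintype.sum_prod_type' (fun k c => ‖A k b c‖ ^ 2) ▸ sum_sum_norm_sq_le_one hA b
  have hB' := Fintype.sum_prod_type' (fun k c => ‖B k b c‖ ^ 2) ▸ sum_sum_norm_sq_le_one hB b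
  simp only [Matrix.sum_apply, mul_apply, conjTranspose_apply]
  rw [← Fintype.sum_prod_type' (fun k c => A k b c * star (B k b c))]
  calc ‖∑ x : κ × γ, A x.1 b x.2 * star (B x.1 b x.2)‖
      ≤ ∑ x : κ × γ, ‖A x.1 b x.2‖ * ‖B x.1 b x.2‖ := (norm_sum_le _ _).trans_eq (by simp)
    _ ≤ √(∑ x : κ × γ, ‖A x.1 b x.2‖ ^ 2) * √(∑ x : κ × γ, ‖B x.1 b x.2‖ ^ 2) :=
        Real.sum_mul_le_sqrt_mul_sqrt _ _ _
    _ ≤ 1 := mul_le_one₀ (Real.sqrt_le_one.mpr hA') (Real.sqrt_nonneg _)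
        (Real.sqrt_le_one.mpr hB')

lemma norm_trace_diagonal_mul_le [Fintype β] [DecidableEq β] (u : β → ℂ) {S : Matrix β β ℂ}
    (hS : ∀ b, ‖S b b‖ ≤ 1) : ‖trace (diagonal u * S)‖ ≤ ∑ b, ‖u b‖ := by
  simp only [trace, diag, diagonal_mul]
  refine (norm_sum_le _ _).trans (Finset.sum_le_sum fun b _ => ?_)
  rw [norm_mul]
  exact mul_le_of_le_one_right (norm_nonneg _) (hS b)

lemma sum_norm_sub_sq [Fintype ι] (f g : ι → ℂ) :
    ∑ i, ‖f i - g i‖ ^ 2 =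
      ∑ i, ‖f i‖ ^ 2 + ∑ i, ‖g i‖ ^ 2 - 2 * (∑ i, star (f i) * g i).re := by
  simp only [Complex.re_sum, Finset.mul_sum, ← Finset.sum_add_distrib, ← Finset.sum_sub_distrib]
  refine Finset.sum_congr rfl fun i _ => ?_
  simp only [← Complex.normSq_eq_norm_sq, Complex.normSq_sub]
  simp [Complex.mul_re]

end MatrixFacts

lemma sum_range_succ_eq_sum_Ico_of_eq_zero {M : Type*} [AddCommMonoid M] {g : ℕ → M} {N : ℕ}
    (hg : g N = 0) : ∑ k ∈ Finset.range N, g (k + 1) = ∑ j ∈ Finset.Ico 1 N, g j := by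
  cases N with
  | zero => simp
  | succ n =>
    rw [Finset.sum_range_succ, hg, add_zero, Finset.sum_Ico_eq_sum_range]
    simp [add_comm]

lemma conjTranspose_mul_self_mul_one_sub_truncP {k : ℕ} (χ' : ℕ) {L : Matrix (Fin k) (Fin k) ℂ}
    (hL : L.IsDiag) (hre : ∀ α, (L α α).im = 0) :
    Lᴴ * L * (1 - truncP χ' k) =
      diagonal fun α : Fin k => if χ' ≤ (α : ℕ) then (((L α α).re ^ 2 : ℝ) : ℂ) else 0 := by
  obtain ⟨v, rfl⟩ : ∃ v, L = diagonal v := ⟨L.diag, hL.diagonal_diag.symm⟩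
  rw [diagonal_conjTranspose, truncP, ← diagonal_one, diagonal_sub, diagonal_mul_diagonal,
    diagonal_mul_diagonal]
  congr 1
  ext α
  have hv : v α = ((v α).re : ℂ) := Complex.ext rfl (by simpa using hre α)
  simp only [Pi.star_apply, diagonal_apply_eq]
  split_ifs <;> try omega
  · simp
  · rw [hv]; simp [sq]

section Configurations

variable {d : ℕ} [NeZero d]

/-- The encoding of configurations used by `mpsPsi` and `mpsPsiT`. -/
def mpsExt {N : ℕ} (σ : Fin N → Fin d) : ℕ → Fin d :=
  fun k => if h : k < N then σ ⟨k, h⟩ else 0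

def mpsExtFrom (j : ℕ) {m : ℕ} (σ : Fin m → Fin d) : ℕ → Fin d :=
  fun i => if h : j ≤ i ∧ i < j + m then σ ⟨i - j, by omega⟩ else 0

lemma mpsExt_eq_mpsExtFrom_zero {N : ℕ} (σ : Fin N → Fin d) : mpsExt σ = mpsExtFrom 0 σ := by
  ext i
  simp only [mpsExt, mpsExtFrom, zero_le, true_and, zero_add, Nat.sub_zero]

lemma mpsExt_snoc_of_lt {j : ℕ} (σ : Fin j → Fin d) (s : Fin d) {i : ℕ} (hi : i < j) :
    mpsExt (Fin.snoc σ s : Fin (j + 1) → Fin d) i = mpsExt σ i := by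
  simp only [mpsExt, dif_pos hi, dif_pos (Nat.lt_succ_of_lt hi)]
  exact Fin.snoc_castSucc (α := fun _ => Fin d) s σ ⟨i, hi⟩

lemma mpsExt_snoc_self {j : ℕ} (σ : Fin j → Fin d) (s : Fin d) :
    mpsExt (Fin.snoc σ s : Fin (j + 1) → Fin d) j = s := by
  simp only [mpsExt, dif_pos (Nat.lt_succ_self j)]
  exact Fin.snoc_last (α := fun _ => Fin d) ..

lemma mpsExtFrom_cons_self (j : ℕ) {m : ℕ} (σ : Fin m → Fin d) (s : Fin d) :
    mpsExtFrom j (Fin.cons s σ : Fin (m + 1) → Fin d) j = s := by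
  rw [mpsExtFrom, dif_pos ⟨le_rfl, by omega⟩]
  simp

lemma mpsExtFrom_cons_of_lt (j : ℕ) {m : ℕ} (σ : Fin m → Fin d) (s : Fin d) {i : ℕ}
    (hi : j < i) :
    mpsExtFrom j (Fin.cons s σ : Fin (m + 1) → Fin d) i = mpsExtFrom (j + 1) σ i := by
  unfold mpsExtFrom
  by_cases h : i < j + 1 + m
  · rw [dif_pos ⟨hi.le, by omega⟩, dif_pos ⟨hi, h⟩]
    have hsucc : (⟨i - j, by omega⟩ : Fin (m + 1)) = Fin.succ ⟨i - (j + 1), by omega⟩ := by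
      ext; simp; omega
    rw [hsucc, Fin.cons_succ]
  · rw [dif_neg (by omega), dif_neg (by omega)]

def mpsSplit {N : ℕ} (k : ℕ) (hk : k ≤ N) :
    (Fin k → Fin d) × (Fin (N - k) → Fin d) ≃ (Fin N → Fin d) :=
  (Fin.appendEquiv k (N - k)).trans ((finCongr (by omega)).arrowCongr (Equiv.refl _))

lemma mpsExt_mpsSplit_of_lt {N k : ℕ} (hk : k ≤ N) (σL : Fin k → Fin d)
    (σR : Fin (N - k) → Fin d) {i : ℕ} (hi : i < k) :
    mpsExt (mpsSplit k hk (σL, σR)) i = mpsExt σL i := by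
  simp only [mpsExt, dif_pos hi, dif_pos (hi.trans_le hk)]
  exact Fin.append_left σL σR ⟨i, hi⟩

lemma mpsExt_mpsSplit_of_le {N k : ℕ} (hk : k ≤ N) (σL : Fin k → Fin d)
    (σR : Fin (N - k) → Fin d) {i : ℕ} (hi : k ≤ i) :
    mpsExt (mpsSplit k hk (σL, σR)) i = mpsExtFrom k σR i := by
  unfold mpsExt mpsExtFrom
  by_cases h : i < N
  · rw [dif_pos h, dif_pos (show k ≤ i ∧ i < k + (N - k) by omega)]
    change Fin.append σL σR (Fin.cast (by omega) ⟨i, h⟩) = _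
    convert Fin.append_right σL σR ⟨i - k, by omega⟩ using 2
    ext; simp; omega
  · rw [dif_neg h, dif_neg (by omega)]

end Configurations

noncomputable def mpsQ (N χ' : ℕ) (χ : ℕ → ℕ) (i : ℕ) : Matrix (Fin (χ i)) (Fin (χ i)) ℂ :=
  if i < N then truncP χ' (χ i) else 1

lemma posSemidef_one_sub_mpsQ_mul_conjTranspose {χ : ℕ → ℕ} (N χ' i : ℕ) :
    (1 - mpsQ N χ' χ i * (mpsQ N χ' χ i)ᴴ).PosSemidef := by
  unfold mpsQ truncP
  split_ifs
  · rw [diagonal_conjTranspose, diagonal_mul_diagonal, ← diagonal_one, diagonal_sub]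
    refine posSemidef_diagonal_iff.mpr fun b => ?_
    split_ifs <;> simp_all
  · simpa using PosSemidef.zero

section MPS

variable {d : ℕ} {χ : ℕ → ℕ}
    {Γ : (i : ℕ) → Fin d → Matrix (Fin (χ i)) (Fin (χ (i + 1))) ℂ}
    {Λ : (i : ℕ) → Matrix (Fin (χ i)) (Fin (χ i)) ℂ} {N χ' : ℕ}
    {Q : (i : ℕ) → Matrix (Fin (χ i)) (Fin (χ i)) ℂ}

variable (Γ Λ N Q) in
/-- `Γⱼ Λⱼ₊₁ Qⱼ₊₁ ⋯ Γ_{N-1} Λ_N Q_N`; the `else` branch is the identity at `j = N` (and junk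
for `j > N`). -/
noncomputable def mpsRight (j : ℕ) (σ : ℕ → Fin d) : Matrix (Fin (χ j)) (Fin (χ N)) ℂ :=
  if j < N then Γ j (σ j) * Λ (j + 1) * Q (j + 1) * mpsRight (j + 1) σ
  else Matrix.of fun a b => if (a : ℕ) = b then 1 else 0
termination_by N - j

lemma mpsRight_self (σ : ℕ → Fin d) : mpsRight Γ Λ N Q N σ = 1 := by
  rw [mpsRight, if_neg (lt_irrefl N)]
  ext a b
  simp [one_apply, Fin.val_eq_val]

lemma mpsRight_of_lt {j : ℕ} (h : j < N) (σ : ℕ → Fin d) :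
    mpsRight Γ Λ N Q j σ = Γ j (σ j) * Λ (j + 1) * Q (j + 1) * mpsRight Γ Λ N Q (j + 1) σ := by
  rw [mpsRight, if_pos h]

lemma mpsRight_congr {j : ℕ} {σ σ' : ℕ → Fin d} (h : ∀ i, j ≤ i → i < N → σ i = σ' i) :
    mpsRight Γ Λ N Q j σ = mpsRight Γ Λ N Q j σ' := by
  unfold mpsRight
  split_ifs with hj
  · rw [h j le_rfl hj, mpsRight_congr fun i hi hi' => h i (by omega) hi']
  · rfl
termination_by N - j

lemma mpsW_congr {j : ℕ} {σ σ' : ℕ → Fin d} (h : ∀ i < j, σ i = σ' i) :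
    mpsW χ Γ Λ j σ = mpsW χ Γ Λ j σ' := by
  induction j with
  | zero => rfl
  | succ j ih => simp only [mpsW, ih fun i hi => h i (by omega), h j (by omega)]

lemma mpsW_eq_mul_mpsRight {j : ℕ} (hj : j ≤ N) (σ : ℕ → Fin d) :
    mpsW χ Γ Λ N σ = mpsW χ Γ Λ j σ * mpsRight Γ Λ N (fun _ => 1) j σ := by
  induction hj using Nat.decreasingInduction with
  | self => rw [mpsRight_self, Matrix.mul_one]
  | of_succ j hj ih =>
    rw [ih, mpsRight_of_lt hj, mpsW]
    simp only [Matrix.mul_one, Matrix.mul_assoc]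

lemma mpsWT_eq_mul_mpsRight {j : ℕ} (hj : j ≤ N) (σ : ℕ → Fin d) :
    mpsWT N χ' χ Γ Λ N σ = mpsWT N χ' χ Γ Λ j σ * mpsRight Γ Λ N (mpsQ N χ' χ) j σ := by
  induction hj using Nat.decreasingInduction with
  | self => rw [mpsRight_self, Matrix.mul_one]
  | of_succ j hj ih =>
    rw [ih, mpsRight_of_lt hj, mpsWT]
    simp only [Matrix.mul_assoc]
    rfl

lemma posSemidef_one_sub_sum_mpsRight [NeZero d] (hQ : ∀ i, (1 - Q i * (Q i)ᴴ).PosSemidef)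
    (hB : ∀ i < N, ∑ s, Γ i s * Λ (i + 1) * (Γ i s * Λ (i + 1))ᴴ = 1) :
    ∀ m j, j + m = N → (1 - ∑ σ : Fin m → Fin d, mpsRight Γ Λ N Q j (mpsExtFrom j σ) *
      (mpsRight Γ Λ N Q j (mpsExtFrom j σ))ᴴ).PosSemidef
  | 0, j, hj => by
    obtain rfl : j = N := by omega
    simpa [mpsRight_self] using PosSemidef.zero
  | m + 1, j, hj => by
    have hcons (σ : Fin m → Fin d) (s : Fin d) :
        mpsRight Γ Λ N Q j (mpsExtFrom j (Fin.cons s σ : Fin (m + 1) → Fin d)) =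
          Γ j s * Λ (j + 1) * Q (j + 1) * mpsRight Γ Λ N Q (j + 1) (mpsExtFrom (j + 1) σ) := by
      rw [mpsRight_of_lt (by omega), mpsExtFrom_cons_self,
        mpsRight_congr fun i hi _ => mpsExtFrom_cons_of_lt j σ s hi]
    rw [← (Fin.consEquiv fun _ => Fin d).sum_comp, Fintype.sum_prod_type]
    simp only [Fin.consEquiv, Equiv.coe_fn_mk, hcons, sum_mul_mul_conjTranspose_self]
    exact posSemidef_one_sub_sum_mul_mul_conjTranspose (hB j (by omega)) (hQ (j + 1))
      (posSemidef_one_sub_sum_mpsRight hQ hB m (j + 1) (by omega))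

variable [NeZero d]

lemma sum_conjTranspose_mpsW_mul_mpsW
    (hA : ∀ i < N, ∑ s, (Λ i * Γ i s)ᴴ * (Λ i * Γ i s) = 1) {j : ℕ} (hj : j ≤ N) :
    ∑ σ : Fin j → Fin d, (mpsW χ Γ Λ j (mpsExt σ))ᴴ * mpsW χ Γ Λ j (mpsExt σ) =
      (Λ j)ᴴ * Λ j := by
  induction j with
  | zero => exact Fintype.sum_unique _
  | succ j ih =>
    have hsnoc (σ : Fin j → Fin d) (s : Fin d) :
        mpsW χ Γ Λ (j + 1) (mpsExt (Fin.snoc σ s : Fin (j + 1) → Fin d)) =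
          mpsW χ Γ Λ j (mpsExt σ) * (Γ j s * Λ (j + 1)) := by
      rw [mpsW, mpsW_congr fun i hi => mpsExt_snoc_of_lt σ s hi, mpsExt_snoc_self,
        Matrix.mul_assoc]
    rw [← (Fin.snocEquiv fun _ => Fin d).sum_comp, Fintype.sum_prod_type]
    simp only [Fin.snocEquiv, Equiv.coe_fn_mk, hsnoc, sum_conjTranspose_mul_mul_self,
      ih (by omega)]
    calc ∑ s, (Γ j s * Λ (j + 1))ᴴ * ((Λ j)ᴴ * Λ j) * (Γ j s * Λ (j + 1))
        = ∑ s, (Λ j * Γ j s * Λ (j + 1))ᴴ * (Λ j * Γ j s * Λ (j + 1)) := by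
          simp only [conjTranspose_mul, Matrix.mul_assoc]
      _ = (Λ (j + 1))ᴴ * Λ (j + 1) := by
          rw [sum_conjTranspose_mul_mul_self, hA j (by omega), Matrix.mul_one]

variable (Γ Λ N χ') in
/-- The term `δⱼ` of the telescoping sum `Ψ - Ψ̃ = ∑ⱼ δⱼ`. -/
noncomputable def mpsBondTerm (j : ℕ) (σ : Fin N → Fin d) : ℂ :=
  entrySum (mpsW χ Γ Λ j (mpsExt σ) * (1 - mpsQ N χ' χ j) *
    mpsRight Γ Λ N (mpsQ N χ' χ) j (mpsExt σ))

lemma mpsBondTerm_self (σ : Fin N → Fin d) : mpsBondTerm Γ Λ N χ' N σ = 0 := by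
  simp [mpsBondTerm, mpsQ, entrySum]

lemma mpsPsi_sub_mpsPsiT (σ : Fin N → Fin d) :
    mpsPsi N χ Γ Λ σ - mpsPsiT N χ' χ Γ Λ σ =
      ∑ j ∈ Finset.Ico 1 N, mpsBondTerm Γ Λ N χ' j σ := by
  set f : ℕ → ℂ := fun j =>
    entrySum (mpsW χ Γ Λ j (mpsExt σ) * mpsRight Γ Λ N (mpsQ N χ' χ) j (mpsExt σ))
  have hN : f N = mpsPsi N χ Γ Λ σ := by
    simp only [f, mpsRight_self, Matrix.mul_one]
    rfl
  have h0 : f 0 = mpsPsiT N χ' χ Γ Λ σ := by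
    simp only [f, mpsPsiT]
    rw [mpsWT_eq_mul_mpsRight (Nat.zero_le N)]
    rfl
  have hstep : ∀ k ∈ Finset.range N, f (k + 1) - f k = mpsBondTerm Γ Λ N χ' (k + 1) σ := by
    intro k hk
    simp only [f, mpsBondTerm, ← entrySum_sub, mpsRight_of_lt (Finset.mem_range.mp hk), mpsW,
      Matrix.mul_sub, Matrix.sub_mul, Matrix.mul_one, Matrix.mul_assoc]
  rw [← hN, ← h0, ← Finset.sum_range_sub, Finset.sum_congr rfl hstep]
  exact sum_range_succ_eq_sum_Ico_of_eq_zero (g := (mpsBondTerm Γ Λ N χ' · σ))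
    (mpsBondTerm_self σ)

lemma mpsW_mpsExt_mpsSplit {k : ℕ} (hk : k ≤ N) (σL : Fin k → Fin d)
    (σR : Fin (N - k) → Fin d) :
    mpsW χ Γ Λ k (mpsExt (mpsSplit k hk (σL, σR))) = mpsW χ Γ Λ k (mpsExt σL) :=
  mpsW_congr fun _ hi => mpsExt_mpsSplit_of_lt hk σL σR hi

lemma mpsRight_mpsExt_mpsSplit {k : ℕ} (hk : k ≤ N) (σL : Fin k → Fin d)
    (σR : Fin (N - k) → Fin d) :
    mpsRight Γ Λ N Q k (mpsExt (mpsSplit k hk (σL, σR))) =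
      mpsRight Γ Λ N Q k (mpsExtFrom k σR) :=
  mpsRight_congr fun _ hi _ => mpsExt_mpsSplit_of_le hk σL σR hi

lemma mpsPsi_mpsSplit {k : ℕ} (hk : k ≤ N) (σL : Fin k → Fin d) (σR : Fin (N - k) → Fin d) :
    mpsPsi N χ Γ Λ (mpsSplit k hk (σL, σR)) =
      entrySum (mpsW χ Γ Λ k (mpsExt σL) * mpsRight Γ Λ N (fun _ => 1) k (mpsExtFrom k σR)) := by
  rw [mpsPsi, ← mpsW_mpsExt_mpsSplit hk σL σR, ← mpsRight_mpsExt_mpsSplit hk σL σR,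
    ← mpsW_eq_mul_mpsRight hk]
  rfl

variable [Unique (Fin (χ 0))] [Unique (Fin (χ N))]

lemma sum_star_mpsPsi_mul_entrySum
    (hA : ∀ i < N, ∑ s, (Λ i * Γ i s)ᴴ * (Λ i * Γ i s) = 1) {j : ℕ} (hj : j ≤ N)
    (M : Matrix (Fin (χ j)) (Fin (χ j)) ℂ) :
    ∑ σ : Fin N → Fin d, star (mpsPsi N χ Γ Λ σ) *
        entrySum (mpsW χ Γ Λ j (mpsExt σ) * M * mpsRight Γ Λ N Q j (mpsExt σ)) =
      trace ((Λ j)ᴴ * Λ j * M * ∑ σ : Fin (N - j) → Fin d,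
        mpsRight Γ Λ N Q j (mpsExtFrom j σ) *
          (mpsRight Γ Λ N (fun _ => 1) j (mpsExtFrom j σ))ᴴ) := by
  rw [← (mpsSplit j hj).sum_comp, Fintype.sum_prod_type]
  simp only [mpsPsi_mpsSplit, mpsW_mpsExt_mpsSplit, mpsRight_mpsExt_mpsSplit,
    sum_sum_star_entrySum_mul_entrySum, ← Matrix.mul_assoc, ← Matrix.sum_mul,
    sum_conjTranspose_mpsW_mul_mpsW hA hj]

lemma norm_sum_star_mpsPsi_mul_mpsBondTerm_le
    (hA : ∀ i < N, ∑ s, (Λ i * Γ i s)ᴴ * (Λ i * Γ i s) = 1)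
    (hB : ∀ i < N, ∑ s, Γ i s * Λ (i + 1) * (Γ i s * Λ (i + 1))ᴴ = 1) {j : ℕ} (hj : j < N)
    (hdiag : (Λ j).IsDiag) (hre : ∀ α, (Λ j α α).im = 0) :
    ‖∑ σ : Fin N → Fin d, star (mpsPsi N χ Γ Λ σ) * mpsBondTerm Γ Λ N χ' j σ‖ ≤
      locErr χ' χ Λ j := by
  have hS := norm_sum_mul_conjTranspose_apply_le_one
    (posSemidef_one_sub_sum_mpsRight (posSemidef_one_sub_mpsQ_mul_conjTranspose N χ') hB _ j
      (Nat.add_sub_cancel' hj.le))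
    (posSemidef_one_sub_sum_mpsRight (Q := fun _ => 1) (fun _ => by simpa using .zero) hB _ j
      (Nat.add_sub_cancel' hj.le))
  have hQ : mpsQ N χ' χ j = truncP χ' (χ j) := if_pos hj
  simp only [mpsBondTerm]
  rw [sum_star_mpsPsi_mul_entrySum hA hj.le, hQ,
    conjTranspose_mul_self_mul_one_sub_truncP χ' hdiag hre]
  refine (norm_trace_diagonal_mul_le _ hS).trans_eq ?_
  simp [locErr, apply_ite]

lemma sum_norm_mpsPsiT_sq_le_one (hΛ0 : Λ 0 = 1)
    (hB : ∀ i < N, ∑ s, Γ i s * Λ (i + 1) * (Γ i s * Λ (i + 1))ᴴ = 1) :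
    ∑ σ : Fin N → Fin d, ‖mpsPsiT N χ' χ Γ Λ σ‖ ^ 2 ≤ 1 := by
  refine le_of_eq_of_le (Finset.sum_congr rfl fun σ _ => ?_) (sum_sum_norm_sq_le_one
    (posSemidef_one_sub_sum_mpsRight (posSemidef_one_sub_mpsQ_mul_conjTranspose N χ') hB N 0
      (zero_add N)) default)
  change ‖entrySum (mpsWT N χ' χ Γ Λ N (mpsExt σ))‖ ^ 2 = _
  rw [mpsWT_eq_mul_mpsRight (Nat.zero_le N), mpsExt_eq_mpsExtFrom_zero]
  simp [mpsWT, hΛ0, entrySum]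

lemma one_sub_globErr_le_re_sum_star_mpsPsi_mul_mpsPsiT
    (hA : ∀ i < N, ∑ s, (Λ i * Γ i s)ᴴ * (Λ i * Γ i s) = 1)
    (hB : ∀ i < N, ∑ s, Γ i s * Λ (i + 1) * (Γ i s * Λ (i + 1))ᴴ = 1)
    (hdiag : ∀ i < N, (Λ i).IsDiag) (hre : ∀ i < N, ∀ α, (Λ i α α).im = 0)
    (hnorm : ∑ σ : Fin N → Fin d, ‖mpsPsi N χ Γ Λ σ‖ ^ 2 = 1) :
    1 - globErr N χ' χ Λ ≤
      (∑ σ : Fin N → Fin d, star (mpsPsi N χ Γ Λ σ) * mpsPsiT N χ' χ Γ Λ σ).re := by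
  have hΨ : ∑ σ : Fin N → Fin d, star (mpsPsi N χ Γ Λ σ) * mpsPsi N χ Γ Λ σ = 1 := by
    simp only [RCLike.star_def, Complex.conj_mul']
    exact_mod_cast hnorm
  have hΨT (σ : Fin N → Fin d) : mpsPsiT N χ' χ Γ Λ σ =
      mpsPsi N χ Γ Λ σ - ∑ j ∈ Finset.Ico 1 N, mpsBondTerm Γ Λ N χ' j σ := by
    rw [← mpsPsi_sub_mpsPsiT, sub_sub_cancel]
  simp only [hΨT, mul_sub, Finset.sum_sub_distrib, hΨ, Finset.mul_sum, Complex.sub_re,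
    Complex.one_re]
  rw [Finset.sum_comm]
  refine sub_le_sub_left ((Complex.re_le_norm _).trans
    ((norm_sum_le _ _).trans (Finset.sum_le_sum fun j hj => ?_))) 1
  obtain ⟨-, hjN⟩ := Finset.mem_Ico.mp hj
  exact norm_sum_star_mpsPsi_mul_mpsBondTerm_le hA hB hjN (hdiag j hjN) (hre j hjN)

end MPS

theorem parallel_mps_compression_distance_bound_general
    (N d : ℕ) [NeZero d]
    (χ : ℕ → ℕ) (hχ0 : χ 0 = 1) (hχN : χ N = 1)
    (Γ : (i : ℕ) → Fin d → Matrix (Fin (χ i)) (Fin (χ (i + 1))) ℂ)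
    (Λ : (i : ℕ) → Matrix (Fin (χ i)) (Fin (χ i)) ℂ)
    (hΛ0 : Λ 0 = 1)
    (hΛdiag : ∀ i ≤ N, (Λ i).IsDiag)
    (hΛreal : ∀ i ≤ N, ∀ α, (Λ i α α).im = 0 ∧ 0 ≤ (Λ i α α).re)
    (hcano : IsCanonicalMPS N χ Γ Λ)
    (hnorm : ∑ σ : Fin N → Fin d, ‖mpsPsi N χ Γ Λ σ‖ ^ 2 = 1)
    (χ' : ℕ) :
    ∑ σ : Fin N → Fin d, ‖mpsPsi N χ Γ Λ σ - mpsPsiT N χ' χ Γ Λ σ‖ ^ 2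
      ≤ 2 * globErr N χ' χ Λ := by
  have := (finCongr hχ0).unique
  have := (finCongr hχN).unique
  have hB := fun i hi => (hcano i hi).2
  have hinner := one_sub_globErr_le_re_sum_star_mpsPsi_mul_mpsPsiT (χ' := χ')
    (fun i hi => (hcano i hi).1) hB (fun i hi => hΛdiag i hi.le)
    (fun i hi α => (hΛreal i hi.le α).1) hnorm
  have hnormT := sum_norm_mpsPsiT_sq_le_one (χ' := χ') hΛ0 hB
  rw [sum_norm_sub_sq, hnorm]
  linarith

/-- Theorem 1 of the paper, distance bound: for an `N`-site MPS in
canonical form with normalized wavefunction, the parallel MPS compression obtained by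
inserting the rank-`χ'` projector at every interior bond satisfies
`∑_σ |Ψ(σ) − Ψ̃_T(σ)|² ≤ 2 ε(χ')`. -/
theorem parallel_mps_compression_distance_bound
    (N d : ℕ) [NeZero d] (hN : 1 ≤ N)
    (χ : ℕ → ℕ) (hχ0 : χ 0 = 1) (hχN : χ N = 1) (hχpos : ∀ i, 1 ≤ χ i)
    (Γ : (i : ℕ) → Fin d → Matrix (Fin (χ i)) (Fin (χ (i + 1))) ℂ)
    (Λ : (i : ℕ) → Matrix (Fin (χ i)) (Fin (χ i)) ℂ)
    (hΛ0 : Λ 0 = 1) (hΛN : Λ N = 1)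
    (hΛdiag : ∀ i ≤ N, (Λ i).IsDiag)
    (hΛreal : ∀ i ≤ N, ∀ α, (Λ i α α).im = 0 ∧ 0 ≤ (Λ i α α).re)
    (hΛdesc : ∀ i ≤ N, ∀ α β : Fin (χ i), α ≤ β → (Λ i β β).re ≤ (Λ i α α).re)
    (hcano : IsCanonicalMPS N χ Γ Λ)
    (hnorm : ∑ σ : Fin N → Fin d, ‖mpsPsi N χ Γ Λ σ‖ ^ 2 = 1)
    (χ' : ℕ) (hχ' : 1 ≤ χ') :
    ∑ σ : Fin N → Fin d, ‖mpsPsi N χ Γ Λ σ - mpsPsiT N χ' χ Γ Λ σ‖ ^ 2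
      ≤ 2 * globErr N χ' χ Λ :=
  parallel_mps_compression_distance_bound_general N d χ hχ0 hχN Γ Λ hΛ0 hΛdiag hΛreal hcano hnorm χ'
end

section
/- Let N ≥ 1, d ≥ 1, and let χ : {0,1,…,N} → ℕ satisfy χ(i) ≥ 1. For each i = 1,…,N let A^{[i]} : Fin d → Matrix (Fin χ(i−1)) (Fin χ(i)) ℂ satisfy the isometry condition Σ_σ (A^{[i]σ})ᴴ A^{[i]σ} = I_{χ(i)}, and for each i = 1,…,N−1 let P_i ∈ Matrix (Fin χ(i)) (Fin χ(i)) ℂ be an orthogonal projection (P_iᴴ = P_i, P_i * P_i = P_i). Let Y^{[N]} ∈ Matrix (Fin χ(N−1)) (Fin χ(N−1)) ℂ be positive semidefinite and define Y^{[i]} = Σ_σ A^{[i]σ} (P_i Y^{[i+1]} P_i) (A^{[i]σ})ᴴ for i = N−1, …, 1. Then every Y^{[i]} is positive semidefinite and Tr(Y^{[1]}) ≤ Tr(Y^{[N]}). In particular, if Tr(Y^{[N]}) = 1 then Tr(Y^{[1]}) ≤ 1. -/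
/-!
Each step `X ↦ ∑ₛ Aₛ (Q X Q) Aₛᴴ` of the recursion preserves positive semidefiniteness and does
not increase the trace: conjugation keeps `X` positive semidefinite, the isometry condition
`∑ₛ Aₛᴴ Aₛ = 1` together with cyclicity of the trace gives `Tr (∑ₛ Aₛ Z Aₛᴴ) = Tr Z`, and
`Tr X - Tr (Q X Q) = Tr ((1 - Q) X (1 - Q)) ≥ 0` for an orthogonal projection `Q`.
Downward induction along the chain then gives the theorem.
-/

open Matrix
open scoped ComplexOrder

namespace Matrix

variable {ι m n R : Type*} [Fintype m] [Fintype n]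

section CommSemiring

variable [CommSemiring R]

theorem trace_mul_mul_of_isIdempotentElem {Q : Matrix n n R} (hQ : IsIdempotentElem Q)
    (M : Matrix n n R) : (Q * M * Q).trace = (M * Q).trace := by
  rw [trace_mul_cycle, hQ.eq, trace_mul_comm]

theorem trace_sum_mul_mul_conjTranspose [StarRing R] [DecidableEq n] [Fintype ι]
    {A : ι → Matrix m n R} (hA : ∑ s, (A s)ᴴ * A s = 1) (X : Matrix n n R) :
    (∑ s, A s * X * (A s)ᴴ).trace = X.trace := by
  calc (∑ s, A s * X * (A s)ᴴ).trace
      = (∑ s, (A s)ᴴ * A s * X).trace := by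
        simp only [trace_sum]
        exact Finset.sum_congr rfl fun s _ => by rw [trace_mul_cycle, Matrix.mul_assoc]
    _ = X.trace := by rw [← Finset.sum_mul, hA, Matrix.one_mul]

end CommSemiring

namespace PosSemidef

variable [CommRing R] [PartialOrder R] [StarRing R]

theorem mul_mul_of_isSelfAdjoint {X Q : Matrix n n R} (hX : X.PosSemidef)
    (hQ : IsSelfAdjoint Q) : (Q * X * Q).PosSemidef := by
  have hQh : Qᴴ = Q := hQ
  simpa only [hQh] using hX.mul_mul_conjTranspose_same Q

variable [AddLeftMono R]

theorem trace_mul_mul_le_of_isStarProjection [DecidableEq n] {M Q : Matrix n n R}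
    (hM : M.PosSemidef) (hQ : IsStarProjection Q) : (Q * M * Q).trace ≤ M.trace := by
  have hQc : IsStarProjection (1 - Q) := hQ.one_sub
  have hsplit : ((1 - Q) * M * (1 - Q)).trace = M.trace - (Q * M * Q).trace := by
    rw [trace_mul_mul_of_isIdempotentElem hQc.isIdempotentElem,
      trace_mul_mul_of_isIdempotentElem hQ.isIdempotentElem, mul_sub, trace_sub, mul_one]
  exact sub_nonneg.mp (hsplit ▸ (hM.mul_mul_of_isSelfAdjoint hQc.isSelfAdjoint).trace_nonneg)

theorem sum_mul_mul_conjTranspose {X : Matrix n n R} (hX : X.PosSemidef)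
    (A : ι → Matrix m n R) (s : Finset ι) : (∑ i ∈ s, A i * X * (A i)ᴴ).PosSemidef :=
  posSemidef_sum s fun i _ => hX.mul_mul_conjTranspose_same (A i)

theorem transfer_step [DecidableEq n] [Fintype ι] {X Q : Matrix n n R} (hX : X.PosSemidef)
    (hQ : IsStarProjection Q) {A : ι → Matrix m n R} (hA : ∑ s, (A s)ᴴ * A s = 1) :
    (∑ s, A s * (Q * X * Q) * (A s)ᴴ).PosSemidef ∧
      (∑ s, A s * (Q * X * Q) * (A s)ᴴ).trace ≤ X.trace := by
  refine ⟨(hX.mul_mul_of_isSelfAdjoint hQ.isSelfAdjoint).sum_mul_mul_conjTranspose A _, ?_⟩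
  rw [trace_sum_mul_mul_conjTranspose hA]
  exact hX.trace_mul_mul_le_of_isStarProjection hQ

end PosSemidef

end Matrix

theorem transfer_recursion_trace_monotone_general
    (N d : ℕ)
    (χ : ℕ → ℕ)
    (A : (i : ℕ) → Fin d → Matrix (Fin (χ i)) (Fin (χ (i + 1))) ℂ)
    (hA : ∀ i < N, ∑ s : Fin d, (A i s)ᴴ * A i s = 1)
    (P : (i : ℕ) → Matrix (Fin (χ i)) (Fin (χ i)) ℂ)
    (hP : ∀ i, 1 ≤ i → i < N → (P i)ᴴ = P i ∧ P i * P i = P i)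
    (Y : (j : ℕ) → Matrix (Fin (χ j)) (Fin (χ j)) ℂ)
    (hYN : (Y (N - 1)).PosSemidef)
    (hYrec : ∀ j, j + 1 < N →
      Y j = ∑ s : Fin d, A j s * (P (j + 1) * Y (j + 1) * P (j + 1)) * (A j s)ᴴ) :
    (∀ j < N, (Y j).PosSemidef) ∧
      (Y 0).trace ≤ (Y (N - 1)).trace ∧
      ((Y (N - 1)).trace = 1 → (Y 0).trace ≤ 1) := by
  have hdown : ∀ j ≤ N - 1, (Y j).PosSemidef ∧ (Y j).trace ≤ (Y (N - 1)).trace := by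
    intro j hj
    induction hj using Nat.decreasingInduction with
    | self => exact ⟨hYN, le_rfl⟩
    | of_succ j hj ih =>
      obtain ⟨hPh, hPi⟩ := hP (j + 1) (by omega) (by omega)
      rw [hYrec j (by omega)]
      obtain ⟨hpsd, htr⟩ := ih.1.transfer_step ⟨hPi, hPh⟩ (hA j (by omega))
      exact ⟨hpsd, htr.trans ih.2⟩
  have htrace := (hdown 0 (Nat.zero_le _)).2
  exact ⟨fun j hj => (hdown j (by omega)).1, htrace, fun h => h ▸ htrace⟩

/-- multi-step trace monotonicity, core of the proof of Lemma 2 of the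
paper: with left-isometric site tensors `A` (the tensor `A i` belongs to site `i + 1`),
orthogonal projections `P i` on the interior bonds `i = 1, …, N − 1`, a positive
semidefinite seed `Y (N−1) = Y^{[N]}` on bond `N − 1`, and the downward recursion
`Y^{[i]} = ∑_σ A^{[i]σ} (P_i Y^{[i+1]} P_i) (A^{[i]σ})ᴴ` (here `Y j = Y^{[j+1]}` lives on
bond `j`), every `Y j` is positive semidefinite and `Tr(Y^{[1]}) ≤ Tr(Y^{[N]})`;
in particular `Tr(Y^{[N]}) = 1` implies `Tr(Y^{[1]}) ≤ 1`. -/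
theorem transfer_recursion_trace_monotone
    (N d : ℕ) [NeZero d] (hN : 1 ≤ N)
    (χ : ℕ → ℕ) (hχpos : ∀ i, 1 ≤ χ i)
    (A : (i : ℕ) → Fin d → Matrix (Fin (χ i)) (Fin (χ (i + 1))) ℂ)
    (hA : ∀ i < N, ∑ s : Fin d, (A i s)ᴴ * A i s = 1)
    (P : (i : ℕ) → Matrix (Fin (χ i)) (Fin (χ i)) ℂ)
    (hP : ∀ i, 1 ≤ i → i < N → (P i)ᴴ = P i ∧ P i * P i = P i)
    (Y : (j : ℕ) → Matrix (Fin (χ j)) (Fin (χ j)) ℂ)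
    (hYN : (Y (N - 1)).PosSemidef)
    (hYrec : ∀ j, j + 1 < N →
      Y j = ∑ s : Fin d, A j s * (P (j + 1) * Y (j + 1) * P (j + 1)) * (A j s)ᴴ) :
    (∀ j < N, (Y j).PosSemidef) ∧
      (Y 0).trace ≤ (Y (N - 1)).trace ∧
      ((Y (N - 1)).trace = 1 → (Y 0).trace ≤ 1) :=
  transfer_recursion_trace_monotone_general N d χ A hA P hP Y hYN hYrec
end
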